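/- If Γ is connected, then the ℚ-vector space ker(γ) has dimension at most 1. -/
import Mathlib


/-- The defining property of the incidence matrix of a multiquiver: every row has
at most one positive and at most one negative entry. -/
def CondM {V E : Type*} (γ : E → V → ℤ) : Prop :=
  ∀ e : E, (∀ v w : V, 0 < γ e v → 0 < γ e w → v = w) ∧
    (∀ v w : V, γ e v < 0 → γ e w < 0 → v = w)

/-- Two vertices are adjacent if they are distinct and some edge is incident to
both of them. -/
def MQAdj {V E : Type*} (γ : E → V → ℤ) (v w : V) : Prop :=
  v ≠ w ∧ ∃ e : E, γ e v ≠ 0 ∧ γ e w ≠ 0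

/-- The multiquiver is connected if any two vertices are related by the
reflexive–transitive closure of adjacency. -/
def MQConnected {V E : Type*} (γ : E → V → ℤ) : Prop :=
  ∀ v w : V, Relation.ReflTransGen (MQAdj γ) v w

/-- The kernel of the incidence matrix `γ`, as a `ℚ`-subspace of `V → ℚ`:
`{d | ∀ e, Σ_v γ e v · d v = 0}`. -/
def kerGamma {V E : Type*} [Fintype V] (γ : E → V → ℤ) : Submodule ℚ (V → ℚ) where
  carrier := {d | ∀ e : E, ∑ v : V, (γ e v : ℚ) * d v = 0}
  add_mem' := by
    intro a b ha hb e
    have : ∑ v : V, (γ e v : ℚ) * (a v + b v)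
        = (∑ v : V, (γ e v : ℚ) * a v) + ∑ v : V, (γ e v : ℚ) * b v := by
      rw [← Finset.sum_add_distrib]
      exact Finset.sum_congr rfl fun v _ => by ring
    simpa [this] using by rw [ha e, hb e, add_zero]
  zero_mem' := by intro e; simp
  smul_mem' := by
    intro c a ha e
    have : ∑ v : V, (γ e v : ℚ) * (c * a v) = c * ∑ v : V, (γ e v : ℚ) * a v := by
      rw [Finset.mul_sum]
      exact Finset.sum_congr rfl fun v _ => by ring
    simp only [Pi.smul_apply, smul_eq_mul]
    rw [this, ha e, mul_zero]

/-- A (not necessarily directed) cycle in the multiquiver with incidence matrix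
`γ`: `n ≥ 2` distinct vertices `v i` and distinct edges `e i`, with `e i`
incident to `v i` and `v (i+1)` (indices mod `n`). -/
structure MQCycle {V E : Type*} (γ : E → V → ℤ) where
  n : ℕ
  hn : 2 ≤ n
  v : ZMod n → V
  e : ZMod n → E
  hv : Function.Injective v
  he : Function.Injective e
  h1 : ∀ i, γ (e i) (v i) ≠ 0
  h2 : ∀ i, γ (e i) (v (i + 1)) ≠ 0

/-- A cycle is balanced if the product of the multiplicities at its sources
equals the product of the multiplicities at its targets. -/
def MQCycle.Balanced {V E : Type*} {γ : E → V → ℤ} (c : MQCycle γ) : Prop :=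
  haveI : NeZero c.n := ⟨by have := c.hn; omega⟩
  ∏ i : ZMod c.n, (γ (c.e i) (c.v i)).natAbs = ∏ i : ZMod c.n, (γ (c.e i) (c.v (i + 1))).natAbs

/-- The setoid on vertices whose classes are the connected components. -/
def mqSetoid {V E : Type*} (γ : E → V → ℤ) : Setoid V :=
  ⟨Relation.EqvGen (MQAdj γ), Relation.EqvGen.is_equivalence _⟩

/-- The edge `e` is a leaf at the component `C`: exactly one vertex is incident
to `e`, and that vertex lies in `C`. -/
def LeafAt {V E : Type*} (γ : E → V → ℤ) (C : Quotient (mqSetoid γ)) (e : E) : Prop :=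
  (∃! v : V, γ e v ≠ 0) ∧ ∀ v : V, γ e v ≠ 0 → Quotient.mk (mqSetoid γ) v = C

/-- A connected component is in equilibrium if no edge is a leaf at it and every
cycle all of whose vertices lie in it is balanced. -/
def InEquilibrium {V E : Type*} (γ : E → V → ℤ) (C : Quotient (mqSetoid γ)) : Prop :=
  (∀ e : E, ¬ LeafAt γ C e) ∧
    ∀ c : MQCycle γ, (∀ i, Quotient.mk (mqSetoid γ) (c.v i) = C) → c.Balanced

/-- If the multiquiver `Γ` is connected, then `ker γ` has dimension at most 1. -/
theorem finrank_kerGamma_le_one {V E : Type*} [Fintype V] [Fintype E]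
    (γ : E → V → ℤ) (hM : CondM γ) (hconn : MQConnected γ) :
    Module.finrank ℚ (kerGamma γ) ≤ 1 := by
  classical
  -- auxiliary: an edge has at most two incident vertices
  have key : ∀ d ∈ kerGamma γ, ∀ v w : V, MQAdj γ v w → d v = 0 → d w = 0 := by
    intro d hd v w ⟨hvw, e, hev, hew⟩ hdv
    obtain ⟨hp, hn⟩ := hM e
    have honly : ∀ u : V, γ e u ≠ 0 → u = v ∨ u = w := by
      intro u hu
      rcases lt_or_gt_of_ne hu with hu' | hu' <;>
        rcases lt_or_gt_of_ne hev with hv' | hv' <;>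
          rcases lt_or_gt_of_ne hew with hw' | hw'
      · exact Or.inl (hn u v hu' hv')
      · exact Or.inl (hn u v hu' hv')
      · exact Or.inr (hn u w hu' hw')
      · exact absurd (hp v w hv' hw') hvw
      · exact absurd (hn v w hv' hw') hvw
      · exact Or.inr (hp u w hu' hw')
      · exact Or.inl (hp u v hu' hv')
      · exact Or.inl (hp u v hu' hv')
    have hsum := hd e
    have h2 : ∑ u ∈ ({v, w} : Finset V), (γ e u : ℚ) * d u = ∑ u : V, (γ e u : ℚ) * d u := by
      apply Finset.sum_subset (Finset.subset_univ _)
      intro u _ hu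
      simp only [Finset.mem_insert, Finset.mem_singleton, not_or] at hu
      have : γ e u = 0 := by
        by_contra h
        rcases honly u h with h' | h' <;> simp [h'] at hu
      simp [this]
    rw [Finset.sum_pair hvw] at h2
    rw [← h2, hdv, mul_zero, zero_add] at hsum
    have hne : (γ e w : ℚ) ≠ 0 := Int.cast_ne_zero.mpr hew
    exact (mul_eq_zero.mp hsum).resolve_left hne
  by_cases hV : Nonempty V
  · obtain ⟨v₀⟩ := hV
    set f : kerGamma γ →ₗ[ℚ] ℚ :=
      (LinearMap.proj v₀).comp (Submodule.subtype (kerGamma γ)) with hf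
    have hinj : Function.Injective f := by
      rw [← LinearMap.ker_eq_bot, LinearMap.ker_eq_bot']
      intro ⟨d, hd⟩ hfd
      have hdv₀ : d v₀ = 0 := hfd
      ext u
      have := hconn v₀ u
      show d u = 0
      induction this with
      | refl => exact hdv₀
      | tail _ hadj ih => exact key d hd _ _ hadj ih
    calc Module.finrank ℚ (kerGamma γ) ≤ Module.finrank ℚ ℚ :=
          LinearMap.finrank_le_finrank_of_injective hinj
      _ = 1 := Module.finrank_self ℚ
  · have : Subsingleton (V → ℚ) := ⟨fun a b => funext fun v => absurd ⟨v⟩ hV⟩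
    have : Module.finrank ℚ (kerGamma γ) ≤ Module.finrank ℚ (V → ℚ) :=
      Submodule.finrank_le _
    have h0 : Module.finrank ℚ (V → ℚ) = 0 := Module.finrank_zero_of_subsingleton
    omega
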